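/- For a family {A_i}_{i∈I} of groups, the torsion length of the free product *_{i∈I} A_i equals the supremum of the torsion lengths of the A_i. -/

import Mathlib

/-!
By induction on `n`, `Tor_n(*ᵢ Aᵢ)` is the normal closure of the union of the `Tor_n(Aᵢ)`.
The inductive step rests on two facts: the kernel of `*ᵢ Aᵢ → *ᵢ (Aᵢ ⧸ Nᵢ)` is the normal closure
of the `Nᵢ`, and the torsion of a free product is normally generated by the torsion of the
factors. For the latter, a reduced word whose first and last letters lie in different factors
has infinite order, while one of length at least two whose first and last letters lie in the same
factor is conjugate to a shorter word. Since moreover `Aᵢ ∩ Tor_n(*ⱼ Aⱼ) = Tor_n(Aᵢ)`, the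
sequence `Tor_n(*ᵢ Aᵢ)` is stationary from `n` on exactly when every `Tor_n(Aᵢ)` is.
-/

/-- Auxiliary: the iterated torsion subgroups bundled with proofs of normality. -/
def torIterAux (G : Type*) [Group G] : ℕ → {N : Subgroup G // N.Normal}
  | 0 => ⟨⊥, inferInstance⟩
  | (i + 1) =>
    let p := torIterAux G i
    haveI := p.2
    ⟨(Subgroup.normalClosure {x : G ⧸ p.1 | IsOfFinOrder x}).comap (QuotientGroup.mk' p.1),
      Subgroup.Normal.comap Subgroup.normalClosure_normal _⟩

/-- `torIter G i` is `Tor_i(G)`: `Tor_0(G) = {e}` and `Tor_{i+1}(G)` is the preimage in `G`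
of the normal closure of the set of torsion elements of `G / Tor_i(G)`. -/
def torIter (G : Type*) [Group G] (i : ℕ) : Subgroup G := (torIterAux G i).1

instance torIter_normal (G : Type*) [Group G] (i : ℕ) : (torIter G i).Normal :=
  (torIterAux G i).2

theorem torIter_succ (G : Type*) [Group G] (i : ℕ) :
    torIter G (i + 1) =
      (Subgroup.normalClosure {x : G ⧸ torIter G i | IsOfFinOrder x}).comap
        (QuotientGroup.mk' (torIter G i)) := rfl

theorem torIter_mono (G : Type*) [Group G] : Monotone (torIter G) := by
  apply monotone_nat_of_le_succ
  intro i
  rw [torIter_succ]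
  calc torIter G i = (QuotientGroup.mk' (torIter G i)).ker := (QuotientGroup.ker_mk' _).symm
    _ ≤ _ := Subgroup.ker_le_comap _ _

/-- `Tor_∞(G)`, the union of all the `Tor_i(G)`. -/
def torInf (G : Type*) [Group G] : Subgroup G := ⨆ i, torIter G i

instance torInf_normal (G : Type*) [Group G] : (torInf G).Normal := by
  constructor
  intro n hn g
  rw [torInf, Subgroup.mem_iSup_of_directed ((torIter_mono G).directed_le)] at hn
  obtain ⟨i, hi⟩ := hn
  exact le_iSup (torIter G) i ((torIter_normal G i).conj_mem n hi g)

/-- The torsion length of `G`: the smallest `n` with `Tor_n(G) = Tor_∞(G)`, or `∞`. -/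
noncomputable def torLen (G : Type*) [Group G] : ℕ∞ :=
  sInf ((↑) '' {n : ℕ | torIter G n = torInf G})

open Monoid

namespace Subgroup

variable {G H : Type*} [Group G] [Group H]

/-- The elements with a positive power in `N`; for normal `N`, the preimage of the torsion
elements of `G ⧸ N`. -/
def torsionModulo (N : Subgroup G) : Set G :=
  {x | ∃ n, 0 < n ∧ x ^ n ∈ N}

theorem coe_subset_torsionModulo (N : Subgroup G) : (N : Set G) ⊆ N.torsionModulo :=
  fun x hx => ⟨1, one_pos, by rwa [pow_one]⟩

theorem comap_normalClosure_image {f : G →* H} (hf : Function.Surjective f) (s : Set G) :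
    comap f (normalClosure (f '' s)) = normalClosure s ⊔ f.ker := by
  rw [← map_normalClosure s f hf, comap_map_eq]

theorem normalClosure_iUnion_image_normalClosure {ι : Type*} {A : ι → Type*}
    [∀ i, Group (A i)] (f : ∀ i, A i →* G) (s : ∀ i, Set (A i)) :
    normalClosure (⋃ i, f i '' normalClosure (s i)) = normalClosure (⋃ i, f i '' s i) := by
  refine le_antisymm (normalClosure_le_normal ?_)
    (normalClosure_mono (Set.iUnion_mono fun i => Set.image_mono subset_normalClosure))
  rintro _ ⟨_, ⟨i, rfl⟩, a, ha, rfl⟩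
  have : normalClosure (s i) ≤ comap (f i) (normalClosure (⋃ i, f i '' s i)) :=
    normalClosure_le_normal fun b hb =>
      subset_normalClosure (Set.mem_iUnion.mpr ⟨i, Set.mem_image_of_mem _ hb⟩)
  exact this ha

end Subgroup

namespace MonoidHom

open Subgroup

variable {G H : Type*} [Group G] [Group H]

theorem preimage_setOf_isOfFinOrder (f : G →* H) :
    f ⁻¹' {y | IsOfFinOrder y} = f.ker.torsionModulo := by
  ext x
  simp only [Set.mem_preimage, Set.mem_ofPred_eq, isOfFinOrder_iff_pow_eq_one, torsionModulo,
    mem_ker, map_pow]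

theorem image_torsionModulo_ker {f : G →* H} (hf : Function.Surjective f) :
    f '' f.ker.torsionModulo = {y | IsOfFinOrder y} := by
  rw [← preimage_setOf_isOfFinOrder, Set.image_preimage_eq _ hf]

theorem comap_normalClosure_setOf_isOfFinOrder {f : G →* H} (hf : Function.Surjective f) :
    comap f (normalClosure {y | IsOfFinOrder y}) = normalClosure f.ker.torsionModulo := by
  rw [← image_torsionModulo_ker hf, comap_normalClosure_image hf, sup_eq_left]
  exact fun x hx => subset_normalClosure (f.ker.coe_subset_torsionModulo hx)

end MonoidHom

section TorIter

variable {G : Type*} [Group G]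

theorem torIter_succ_eq_normalClosure (n : ℕ) :
    torIter G (n + 1) = Subgroup.normalClosure (torIter G n).torsionModulo := by
  rw [torIter_succ, (QuotientGroup.mk' _).comap_normalClosure_setOf_isOfFinOrder
    (QuotientGroup.mk'_surjective _), QuotientGroup.ker_mk']

theorem torIter_eq_of_succ_eq {n m : ℕ} (h : torIter G (n + 1) = torIter G n) (hnm : n ≤ m) :
    torIter G m = torIter G n := by
  induction m, hnm using Nat.le_induction with
  | base => rfl
  | succ m _ ih => rw [torIter_succ_eq_normalClosure, ih, ← torIter_succ_eq_normalClosure, h]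

theorem torIter_eq_torInf_of_le {m n : ℕ} (h : torIter G m = torInf G) (hmn : m ≤ n) :
    torIter G n = torInf G :=
  le_antisymm (le_iSup (torIter G) n) (h ▸ torIter_mono G hmn)

theorem torIter_eq_torInf_iff {n : ℕ} :
    torIter G n = torInf G ↔ torIter G (n + 1) = torIter G n := by
  refine ⟨fun h => le_antisymm (h ▸ le_iSup (torIter G) (n + 1)) (torIter_mono G n.le_succ),
    fun h => le_antisymm (le_iSup (torIter G) n) (iSup_le fun m => ?_)⟩
  rcases le_total m n with hmn | hnm
  · exact torIter_mono G hmn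
  · exact (torIter_eq_of_succ_eq h hnm).le

theorem torLen_le_iff {n : ℕ} : torLen G ≤ n ↔ torIter G (n + 1) = torIter G n := by
  rw [← torIter_eq_torInf_iff]
  refine ⟨fun h => ?_, fun h => sInf_le ⟨n, h, rfl⟩⟩
  obtain ⟨_, ⟨m, hm, rfl⟩, hmn⟩ :=
    sInf_lt_iff.mp ((ENat.lt_add_one_iff (ENat.natCast_ne_top n)).mpr h)
  exact torIter_eq_torInf_of_le hm (Nat.lt_succ_iff.mp (by exact_mod_cast hmn))

end TorIter

namespace Monoid.CoprodI

section Words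

variable {ι : Type*} {M : ι → Type*} [∀ i, Monoid (M i)]

theorem NeWord.prod_ne_one {i j : ι} (w : NeWord M i j) : w.prod ≠ 1 := by
  classical
  intro h
  have : w.toWord = Word.empty := by
    rw [← Word.equiv.apply_symm_apply w.toWord, ← Word.equiv.apply_symm_apply Word.empty]
    exact congrArg Word.equiv h
  exact w.toList_ne_nil (congrArg Word.toList this)

theorem NeWord.not_isOfFinOrder_prod {i j : ι} (w : NeWord M i j) (hij : i ≠ j) :
    ¬IsOfFinOrder w.prod := by
  have hpow : ∀ n, ∃ v : NeWord M i j, v.prod = w.prod ^ (n + 1) := by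
    intro n
    induction n with
    | zero => exact ⟨w, (pow_one _).symm⟩
    | succ n ih =>
      obtain ⟨v, hv⟩ := ih
      exact ⟨v.append hij.symm w, by rw [NeWord.append_prod, hv, ← pow_succ]⟩
  rintro hw
  obtain ⟨n, hn, hwn⟩ := isOfFinOrder_iff_pow_eq_one.mp hw
  obtain ⟨v, hv⟩ := hpow (n - 1)
  rw [Nat.sub_add_cancel hn] at hv
  exact v.prod_ne_one (hv.trans hwn)

/-- A cyclically reduced word has infinite order. -/
theorem Word.not_isOfFinOrder_prod {w : Word M}
    (hw : w.fstIdx ≠ w.toList.getLast?.map Sigma.fst) : ¬IsOfFinOrder w.prod := by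
  obtain ⟨i, j, v, rfl⟩ := NeWord.of_word w (by rintro rfl; exact hw rfl)
  have hv : v.toWord.toList = v.toList := rfl
  simp only [Word.fstIdx, hv, NeWord.toList_head?, NeWord.toList_getLast?, Option.map_some,
    ne_eq, Option.some.injEq] at hw
  exact v.not_isOfFinOrder_prod hw

end Words

section Groups

variable {ι : Type*} {G : ι → Type*} [∀ i, Group (G i)]

theorem Word.exists_length_lt_prod_eq_conj [DecidableEq ι] [∀ i, DecidableEq (G i)]
    {w : Word G} {i : ι} {m m' : G i} {l : List (Σ i, G i)}
    (hw : w.toList = ⟨i, m⟩ :: (l ++ [⟨i, m'⟩])) :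
    ∃ v : Word G, v.toList.length < w.toList.length ∧ v.prod = of m' * w.prod * (of m')⁻¹ := by
  have hchain := w.chain_ne
  rw [hw] at hchain
  let u : Word G :=
    { toList := l
      ne_one := fun x hx => w.ne_one x (by simp [hw, hx])
      chain_ne := hchain.infix ⟨[⟨i, m⟩], [⟨i, m'⟩], rfl⟩ }
  have hu : u.fstIdx ≠ some i := by
    rw [Word.fstIdx_ne_iff]
    intro x hx
    rw [List.isChain_cons] at hchain
    exact hchain.1 x (List.mem_head?_append_of_mem_head? hx)
  refine ⟨Word.rcons ⟨m' * m, u, hu⟩, ?_, ?_⟩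
  · rw [hw]
    unfold Word.rcons
    split <;> simp [u]
  · rw [Word.prod_rcons, show w.prod = of m * u.prod * of m' by simp [Word.prod, hw, u, mul_assoc],
      map_mul]
    group

theorem Word.prod_mem_normalClosure_of_isOfFinOrder [DecidableEq ι] [∀ i, DecidableEq (G i)]
    (w : Word G) (hw : IsOfFinOrder w.prod) :
    w.prod ∈ Subgroup.normalClosure (⋃ i, of '' {g : G i | IsOfFinOrder g}) := by
  rcases hlist : w.toList with _ | ⟨⟨i, m⟩, rest⟩
  · simp [Word.prod, hlist, one_mem]
  obtain rfl | ⟨l, ⟨j, m'⟩, rfl⟩ := rest.eq_nil_or_concat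
  · have hprod : w.prod = of m := by simp [Word.prod, hlist]
    rw [hprod] at hw ⊢
    exact Subgroup.subset_normalClosure
      (Set.mem_iUnion.mpr ⟨i, m, (of_injective i).isOfFinOrder_iff.mp hw, rfl⟩)
  rw [List.concat_eq_append] at hlist
  obtain rfl | hij := eq_or_ne i j
  · obtain ⟨v, hlen, hv⟩ := Word.exists_length_lt_prod_eq_conj hlist
    have hv_fin : IsOfFinOrder v.prod := hv ▸ (MulAut.conj (of m')).toMonoidHom.isOfFinOrder hw
    have hw' : w.prod = (of m')⁻¹ * v.prod * (of m')⁻¹⁻¹ := by rw [hv]; group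
    rw [hw']
    exact Subgroup.normalClosure_normal.conj_mem _
      (Word.prod_mem_normalClosure_of_isOfFinOrder v hv_fin) _
  · refine absurd hw (Word.not_isOfFinOrder_prod ?_)
    rw [Word.fstIdx, hlist, ← List.cons_append, List.getLast?_concat]
    simpa using hij
termination_by w.toList.length

theorem normalClosure_setOf_isOfFinOrder :
    Subgroup.normalClosure {x : CoprodI G | IsOfFinOrder x} =
      Subgroup.normalClosure (⋃ i, of '' {g : G i | IsOfFinOrder g}) := by
  classical
  refine le_antisymm (Subgroup.normalClosure_le_normal fun x hx => ?_)
    (Subgroup.normalClosure_mono ?_)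
  · have hx' : (Word.equiv x).prod = x := Word.equiv.symm_apply_apply x
    rw [← hx'] at hx ⊢
    exact Word.prod_mem_normalClosure_of_isOfFinOrder _ hx
  · rintro _ ⟨_, ⟨i, rfl⟩, g, hg, rfl⟩
    exact of.isOfFinOrder hg

end Groups

section Map

open Subgroup

variable {ι : Type*} {G H : ι → Type*} [∀ i, Group (G i)] [∀ i, Group (H i)]

def map (f : ∀ i, G i →* H i) : CoprodI G →* CoprodI H :=
  lift fun i => of.comp (f i)

@[simp]
theorem map_of (f : ∀ i, G i →* H i) {i : ι} (g : G i) : map f (of g) = of (f i g) :=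
  lift_of _ _

theorem map_surjective {f : ∀ i, G i →* H i} (hf : ∀ i, Function.Surjective (f i)) :
    Function.Surjective (map f) := by
  intro y
  induction y using CoprodI.induction_on with
  | one => exact ⟨1, map_one _⟩
  | of i h =>
    obtain ⟨g, rfl⟩ := hf i h
    exact ⟨of g, map_of f g⟩
  | mul x y hx hy =>
    obtain ⟨a, rfl⟩ := hx
    obtain ⟨b, rfl⟩ := hy
    exact ⟨a * b, map_mul _ _ _⟩

theorem image_map_iUnion_image_of (f : ∀ i, G i →* H i) (s : ∀ i, Set (G i)) :
    map f '' ⋃ i, of '' s i = ⋃ i, of '' (f i '' s i) := by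
  simp only [Set.image_iUnion, Set.image_image, map_of]

theorem comap_of_ker_map (f : ∀ i, G i →* H i) (i : ι) :
    comap of (map f).ker = (f i).ker := by
  ext g
  simp only [mem_comap, MonoidHom.mem_ker, map_of, map_eq_one_iff _ (of_injective i)]

theorem ker_map_mk' (N : ∀ i, Subgroup (G i)) [∀ i, (N i).Normal] :
    (map fun i => QuotientGroup.mk' (N i)).ker = normalClosure (⋃ i, of '' (N i : Set (G i))) := by
  set K := normalClosure (⋃ i, of '' (N i : Set (G i)))
  refine le_antisymm ?_ (normalClosure_le_normal ?_)
  · have hNK : ∀ i, N i ≤ ((QuotientGroup.mk' K).comp of).ker := fun i g hg =>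
      (QuotientGroup.eq_one_iff _).mpr (subset_normalClosure (Set.mem_iUnion.mpr ⟨i, g, hg, rfl⟩))
    let ψ : CoprodI (fun i => G i ⧸ N i) →* CoprodI G ⧸ K :=
      lift fun i => QuotientGroup.lift (N i) ((QuotientGroup.mk' K).comp of) (hNK i)
    have hψ : ψ.comp (map fun i => QuotientGroup.mk' (N i)) = QuotientGroup.mk' K :=
      ext_hom _ _ fun i => MonoidHom.ext fun g => by simp [ψ]
    calc (map fun i => QuotientGroup.mk' (N i)).ker
        ≤ comap (map fun i => QuotientGroup.mk' (N i)) ψ.ker := MonoidHom.ker_le_comap _ _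
      _ = K := by rw [MonoidHom.comap_ker, hψ, QuotientGroup.ker_mk']
  · rintro _ ⟨_, ⟨i, rfl⟩, g, hg, rfl⟩
    rw [SetLike.mem_coe, MonoidHom.mem_ker, map_of, map_eq_one_iff _ (of_injective i),
      ← MonoidHom.mem_ker, QuotientGroup.ker_mk']
    exact hg

theorem normalClosure_torsionModulo_normalClosure (N : ∀ i, Subgroup (G i)) [∀ i, (N i).Normal] :
    normalClosure (normalClosure (⋃ i, of '' (N i : Set (G i)))).torsionModulo =
      normalClosure (⋃ i, of '' (N i).torsionModulo) := by
  set φ := map fun i => QuotientGroup.mk' (N i)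
  have hφ : Function.Surjective φ := map_surjective fun i => QuotientGroup.mk'_surjective (N i)
  calc normalClosure (normalClosure (⋃ i, of '' (N i : Set (G i)))).torsionModulo
      = comap φ (normalClosure {y | IsOfFinOrder y}) := by
        rw [φ.comap_normalClosure_setOf_isOfFinOrder hφ, ker_map_mk']
    _ = comap φ (normalClosure (φ '' ⋃ i, of '' (N i).torsionModulo)) := by
        rw [normalClosure_setOf_isOfFinOrder, image_map_iUnion_image_of]
        simp_rw [← QuotientGroup.ker_mk' (N _),
          MonoidHom.image_torsionModulo_ker (QuotientGroup.mk'_surjective _)]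
    _ = normalClosure (⋃ i, of '' (N i).torsionModulo) := by
        rw [comap_normalClosure_image hφ, sup_eq_left, ker_map_mk']
        exact normalClosure_mono
          (Set.iUnion_mono fun i => Set.image_mono (N i).coe_subset_torsionModulo)

end Map

end Monoid.CoprodI

section FreeProduct

open Monoid.CoprodI Subgroup

variable {ι : Type*} {A : ι → Type*} [∀ i, Group (A i)]

theorem torIter_coprodI (n : ℕ) :
    torIter (CoprodI A) n = normalClosure (⋃ i, of '' (torIter (A i) n : Set (A i))) := by
  induction n with
  | zero =>
    refine (normalClosure_eq_bot_iff.mpr ?_).symm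
    rintro _ ⟨_, ⟨i, rfl⟩, g, hg, rfl⟩
    rw [(mem_bot.mp hg : g = 1), map_one]
    rfl
  | succ n ih =>
    rw [torIter_succ_eq_normalClosure, ih, normalClosure_torsionModulo_normalClosure,
      ← normalClosure_iUnion_image_normalClosure]
    simp_rw [torIter_succ_eq_normalClosure]

theorem torIter_eq_comap_of (n : ℕ) (i : ι) :
    torIter (A i) n = comap of (torIter (CoprodI A) n) := by
  rw [torIter_coprodI, ← ker_map_mk', comap_of_ker_map, QuotientGroup.ker_mk']

theorem torIter_coprodI_succ_eq_iff (n : ℕ) :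
    torIter (CoprodI A) (n + 1) = torIter (CoprodI A) n ↔
      ∀ i, torIter (A i) (n + 1) = torIter (A i) n := by
  refine ⟨fun h i => ?_, fun h => ?_⟩
  · rw [torIter_eq_comap_of (n + 1) i, torIter_eq_comap_of n i, h]
  · rw [torIter_coprodI, torIter_coprodI]
    simp_rw [h]

end FreeProduct

/-- The torsion length of a free product `*_i A_i` is the supremum of the torsion lengths of
the factors. -/
theorem torLen_coprodI {ι : Type*} (A : ι → Type*) [∀ i, Group (A i)] :
    torLen (CoprodI A) = ⨆ i : ι, torLen (A i) := by
  refine WithTop.eq_of_forall_le_coe_iff fun n => ?_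
  change torLen _ ≤ (n : ℕ∞) ↔ ⨆ i, torLen (A i) ≤ (n : ℕ∞)
  simp only [iSup_le_iff, torLen_le_iff]
  exact torIter_coprodI_succ_eq_iff n
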